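/- arXiv:2605.17545 — 2 statements merged into one kernel-verified Lean document; each statement's English description precedes it below -/
import Mathlib

section
/- Let P ∈ F_q[t; σ] be a twisted polynomial of degree 3 with no linear right divisor in F_q[t; σ]. Then P, viewed as an element of F_{q²}[t; σ] (where σ is extended to F_{q²}), has no linear right divisor in F_{q²}[t; σ] either. -/
/-!
By the right factor theorem, `t - b` right-divides `P` iff the right evaluation
`P(b) = ∑ aᵢ σ^{i-1}(b) ⋯ σ(b) b` vanishes. Let `b ∈ F_{q²} \ F_q` be a right root of `P`. The
`q`-Frobenius `τ` commutes with `σ` and fixes the coefficients of `P`, so `τ b` is another right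
root, and the monic quadratic `L = t² + t₁ t + t₀` with right roots `b` and `τ b` is `τ`-invariant,
i.e. `L ∈ F_q[t; σ]`. The remainder `d₁ t + d₀` of `P` on right division by `L` lies in `F_q[t]`
and vanishes at `b ∉ F_q`, hence is zero: `P = (a t + w) L`. If `L` has no right root in `F_q`,
a collision of the map `x ↦ x σ(L(x)) / L(x)` produces one explicitly, so this map is a bijection
of `F_q`, and a preimage of `-w / a` is a right root of `P` in `F_q`.
-/

open Polynomial

/-- Multiplication in the twisted polynomial ring `F_q[t; σ]`, with the rule
`t·a = σ(a)·t`, represented on the coefficient data of ordinary polynomials. -/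
noncomputable def skewMul {F : Type*} [Field F] (σ : F → F) (P Q : Polynomial F) :
    Polynomial F :=
  ∑ i ∈ P.support, ∑ j ∈ Q.support,
    Polynomial.C (P.coeff i * σ^[i] (Q.coeff j)) * Polynomial.X ^ (i + j)

open Finset

section SkewEvaluation

variable {E : Type*} [Field E] (σ : E →+* E)

lemma skewMul_eq_sum (P Q : E[X]) :
    skewMul σ P Q = P.sum fun i a => Q.sum fun j c => C (a * σ^[i] c) * X ^ (i + j) :=
  rfl

lemma skewMul_add_left (P P' Q : E[X]) :
    skewMul σ (P + P') Q = skewMul σ P Q + skewMul σ P' Q := by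
  simp only [skewMul_eq_sum]
  exact sum_add_index P P' _ (fun _ => by simp [Polynomial.sum_def])
    fun _ _ _ => by simp only [Polynomial.sum_def, ← sum_add_distrib, add_mul, C_add]

lemma skewMul_monomial_left (n : ℕ) (a : E) (Q : E[X]) :
    skewMul σ (monomial n a) Q = Q.sum fun j c => C (a * σ^[n] c) * X ^ (n + j) := by
  rw [skewMul_eq_sum]
  exact sum_monomial_index a _ (by simp [Polynomial.sum_def])

lemma skewMul_monomial_X_sub_C (n : ℕ) (a b : E) :
    skewMul σ (monomial n a) (X - C b) = monomial (n + 1) a - monomial n (a * σ^[n] b) := by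
  rw [skewMul_monomial_left, sub_eq_add_neg, ← C_neg, sum_add_index _ _ _ (fun _ => by simp)
    fun _ _ _ => by rw [iterate_map_add, mul_add, C_add, add_mul],
    sum_X_index (by simp), sum_C_index (by simp)]
  simp only [iterate_map_one, iterate_map_neg, mul_one, mul_neg, C_neg, neg_mul, add_zero,
    C_mul_X_pow_eq_monomial, sub_eq_add_neg]

def skewNorm (b : E) (n : ℕ) : E := ∏ j ∈ range n, σ^[j] b

/-- Right evaluation `Q(b) = ∑ aᵢ σ^{i-1}(b) ⋯ σ(b) b`: the remainder of `Q` on right division by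
`t - b` (`exists_eq_skewMul_X_sub_C_add_C`). -/
noncomputable def skewEval (b : E) : E[X] →ₗ[E] E :=
  lsum fun n => LinearMap.mulRight E (skewNorm σ b n)

lemma skewEval_monomial (b : E) (n : ℕ) (a : E) :
    skewEval σ b (monomial n a) = a * skewNorm σ b n := by
  simp [skewEval]

lemma skewEval_C (b a : E) : skewEval σ b (C a) = a := by
  simp [← monomial_zero_left, skewEval_monomial, skewNorm]

lemma skewEval_skewMul_X_sub_C (R : E[X]) (b : E) :
    skewEval σ b (skewMul σ R (X - C b)) = 0 := by
  induction R using Polynomial.induction_on' with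
  | add R R' hR hR' => rw [skewMul_add_left, map_add, hR, hR', add_zero]
  | monomial n a =>
    rw [skewMul_monomial_X_sub_C, map_sub, skewEval_monomial, skewEval_monomial, skewNorm,
      skewNorm, prod_range_succ]
    ring

lemma exists_eq_skewMul_X_sub_C_add_C (Q : E[X]) (b : E) :
    ∃ R r, Q = skewMul σ R (X - C b) + C r := by
  induction Q using Polynomial.induction_on' with
  | add Q Q' hQ hQ' =>
    obtain ⟨R, r, hR⟩ := hQ
    obtain ⟨R', r', hR'⟩ := hQ'
    exact ⟨R + R', r + r', by rw [skewMul_add_left, C_add]; linear_combination hR + hR'⟩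
  | monomial n a =>
    induction n generalizing a with
    | zero => exact ⟨0, a, by simp [skewMul]⟩
    | succ n ih =>
      obtain ⟨R, r, hR⟩ := ih (a * σ^[n] b)
      refine ⟨monomial n a + R, r, ?_⟩
      rw [skewMul_add_left, skewMul_monomial_X_sub_C]
      linear_combination hR

theorem exists_eq_skewMul_X_sub_C_iff (Q : E[X]) (b : E) :
    (∃ R, Q = skewMul σ R (X - C b)) ↔ skewEval σ b Q = 0 := by
  refine ⟨fun ⟨R, hR⟩ => hR ▸ skewEval_skewMul_X_sub_C σ R b, fun hQ => ?_⟩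
  obtain ⟨R, r, hR⟩ := exists_eq_skewMul_X_sub_C_add_C σ Q b
  have hr : skewEval σ b Q = r := by
    rw [hR, map_add, skewEval_skewMul_X_sub_C, skewEval_C, zero_add]
  exact ⟨R, by rw [hR, ← hr, hQ, C_0, add_zero]⟩

lemma skewEval_map {E' : Type*} [Field E'] (σ' : E' →+* E') (φ : E →+* E')
    (hφ : Function.Semiconj φ σ σ') (Q : E[X]) (b : E) :
    skewEval σ' (φ b) (Q.map φ) = φ (skewEval σ b Q) := by
  induction Q using Polynomial.induction_on' with
  | add Q Q' hQ hQ' => rw [Polynomial.map_add, map_add, map_add, hQ, hQ', map_add]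
  | monomial n a =>
    simp only [map_monomial, skewEval_monomial, skewNorm, map_mul, map_prod,
      (hφ.iterate_right _).eq]

lemma skewEval_of_natDegree_le_three (Q : E[X]) (hQ : Q.natDegree ≤ 3) (z : E) :
    skewEval σ z Q = Q.coeff 0 + Q.coeff 1 * z + Q.coeff 2 * (σ z * z)
      + Q.coeff 3 * (σ (σ z) * σ z * z) := by
  rw [skewEval, lsum_apply, sum_over_range' Q (by simp) 4 (by omega)]
  simp only [skewNorm, LinearMap.mulRight_apply, sum_range_succ, range_one, sum_singleton,
    range_zero, prod_empty, mul_one, prod_singleton, Function.iterate_zero, id_eq, prod_range_succ,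
    Function.iterate_succ, Function.comp_apply]
  ring

end SkewEvaluation

section Quadratic

variable {E : Type*} [Field E] (σ : E →+* E)

/-- The right evaluation of `t² + t₁ t + t₀` at `z`. -/
def skewQuadratic (t₀ t₁ z : E) : E := t₀ + t₁ * z + σ z * z

/-- Right division of `Q` by `t² + t₁ t + t₀`, with quotient `Q₃ t + w` and remainder
`d₁ t + d₀`, evaluated at `z`. -/
lemma skewEval_eq_linear_mul_skewQuadratic_add (Q : E[X]) (hQ : Q.natDegree ≤ 3) (t₀ t₁ z : E) :
    skewEval σ z Q = Q.coeff 3 * σ (skewQuadratic σ t₀ t₁ z) * z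
      + (Q.coeff 2 - Q.coeff 3 * σ t₁) * skewQuadratic σ t₀ t₁ z
      + ((Q.coeff 1 - Q.coeff 3 * σ t₀ - (Q.coeff 2 - Q.coeff 3 * σ t₁) * t₁) * z
        + (Q.coeff 0 - (Q.coeff 2 - Q.coeff 3 * σ t₁) * t₀)) := by
  rw [skewEval_of_natDegree_le_three σ Q hQ, skewQuadratic, map_add, map_add, map_mul, map_mul]
  ring

lemma exists_fixed_skewQuadratic_eq_zero (τ : E →+* E) (hστ : Function.Commute σ τ) {b : E}
    (hb : τ b ≠ b) (hτb : τ (τ b) = b) :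
    ∃ s₀ s₁ : E, τ s₀ = s₀ ∧ τ s₁ = s₁ ∧ skewQuadratic σ s₀ s₁ b = 0 := by
  set c := τ b
  have hbc : b - c ≠ 0 := sub_ne_zero.2 hb.symm
  set s₁ := (σ c * c - σ b * b) / (b - c)
  have hs₁ : s₁ * (b - c) = σ c * c - σ b * b := div_mul_cancel₀ _ hbc
  have hτs₁ : τ s₁ = s₁ := by
    simp only [s₁, map_div₀, map_sub, map_mul, ← hστ.eq, hτb]
    rw [← neg_sub b c, ← neg_sub (σ c * c), neg_div_neg_eq]
  refine ⟨-(σ b * b) - s₁ * b, s₁, ?_, hτs₁, by rw [skewQuadratic]; ring⟩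
  simp only [map_sub, map_neg, map_mul, ← hστ.eq, hτs₁]
  linear_combination hs₁

end Quadratic

section FiniteField

variable {F : Type*} [Field F] (σ : F →+* F) {t₀ t₁ : F}

lemma skewQuadratic_div_sub_mul_eq (x y : F)
    (hxy : skewQuadratic σ t₀ t₁ y - skewQuadratic σ t₀ t₁ x ≠ 0) :
    skewQuadratic σ t₀ t₁ ((x * skewQuadratic σ t₀ t₁ y - y * skewQuadratic σ t₀ t₁ x) /
        (skewQuadratic σ t₀ t₁ y - skewQuadratic σ t₀ t₁ x))
      * (σ (skewQuadratic σ t₀ t₁ y - skewQuadratic σ t₀ t₁ x)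
        * (skewQuadratic σ t₀ t₁ y - skewQuadratic σ t₀ t₁ x))
      = (σ x - σ y) * (x * σ (skewQuadratic σ t₀ t₁ x) * skewQuadratic σ t₀ t₁ y
        - y * σ (skewQuadratic σ t₀ t₁ y) * skewQuadratic σ t₀ t₁ x) := by
  have hσ := (map_ne_zero σ).2 hxy
  generalize hD : skewQuadratic σ t₀ t₁ y - skewQuadratic σ t₀ t₁ x = D at hxy hσ ⊢
  rw [skewQuadratic, map_div₀]
  field_simp
  simp only [skewQuadratic, map_add, map_mul, map_sub, ← hD]
  ring

lemma eq_of_mul_skewQuadratic_eq (hl : ∀ z, skewQuadratic σ t₀ t₁ z ≠ 0) {x y : F}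
    (h : x * σ (skewQuadratic σ t₀ t₁ x) * skewQuadratic σ t₀ t₁ y
      = y * σ (skewQuadratic σ t₀ t₁ y) * skewQuadratic σ t₀ t₁ x) : x = y := by
  by_cases hxy : skewQuadratic σ t₀ t₁ y - skewQuadratic σ t₀ t₁ x = 0
  · rw [sub_eq_zero.1 hxy] at h
    exact mul_right_cancel₀ ((map_ne_zero σ).2 (hl x)) (mul_right_cancel₀ (hl x) h)
  · have hz := skewQuadratic_div_sub_mul_eq σ x y hxy
    rw [sub_eq_zero.2 h, mul_zero] at hz
    exact absurd ((mul_eq_zero.1 hz).resolve_right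
      (mul_ne_zero ((map_ne_zero σ).2 hxy) hxy)) (hl _)

/-- The left-hand side is the right evaluation of `(a t + w)(t² + t₁ t + t₀)` at `z`. -/
lemma exists_linear_mul_skewQuadratic_eq_zero [Finite F] (t₀ t₁ : F) {a : F} (ha : a ≠ 0)
    (w : F) : ∃ z, a * σ (skewQuadratic σ t₀ t₁ z) * z + w * skewQuadratic σ t₀ t₁ z = 0 := by
  set l := skewQuadratic σ t₀ t₁
  by_cases hl : ∃ z, l z = 0
  · obtain ⟨z, hz⟩ := hl
    exact ⟨z, by rw [hz, map_zero]; ring⟩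
  push Not at hl
  have hinj : Function.Injective fun x => x * σ (l x) / l x := fun x y hxy =>
    eq_of_mul_skewQuadratic_eq σ hl ((div_eq_div_iff (hl x) (hl y)).1 hxy)
  obtain ⟨z, hz⟩ := Finite.injective_iff_surjective.1 hinj (-w / a)
  refine ⟨z, ?_⟩
  rw [div_eq_div_iff (hl z) ha] at hz
  linear_combination hz

end FiniteField

lemma mem_range_algebraMap_of_pow_card_eq {F K : Type*} [Field F] [Fintype F] [Field K] [Finite K]
    [Algebra F K] {x : K} (hx : x ^ Fintype.card F = x) : x ∈ Set.range (algebraMap F K) := by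
  rw [IsGalois.mem_range_algebraMap_iff_fixed]
  intro g
  obtain ⟨n, rfl⟩ := (FiniteField.bijective_frobeniusAlgEquivOfAlgebraic_pow F K).2 g
  rw [AlgEquiv.coe_pow, FiniteField.coe_frobeniusAlgEquivOfAlgebraic]
  exact Function.iterate_fixed hx _

section Descent

variable {p m k : ℕ} [Fact p.Prime] {F K : Type*} [Field F] [Field K] [Algebra F K] [Fintype F]
  [Fintype K] [CharP K p]

lemma exists_skewQuadratic_eq_zero_of_notMem_range (hF : Fintype.card F = p ^ m)
    (hK : Fintype.card K = (p ^ m) ^ 2) {b : K} (hb : b ∉ Set.range (algebraMap F K)) :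
    ∃ t₀ t₁ : F, skewQuadratic (iterateFrobenius K p k)
      (algebraMap F K t₀) (algebraMap F K t₁) b = 0 := by
  set τ := iterateFrobenius K p m
  have hτ_range : ∀ s, τ s = s → s ∈ Set.range (algebraMap F K) := fun s hs =>
    mem_range_algebraMap_of_pow_card_eq (hF ▸ hs)
  have hττb : τ (τ b) = b := by
    rw [iterateFrobenius_def, iterateFrobenius_def, ← pow_mul, ← sq, ← hK, FiniteField.pow_card]
  obtain ⟨s₀, s₁, hs₀, hs₁, hl⟩ := exists_fixed_skewQuadratic_eq_zero (iterateFrobenius K p k) τ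
    (fun x => pow_right_comm x _ _) (fun h => hb (hτ_range b h)) hττb
  obtain ⟨t₀, rfl⟩ := hτ_range s₀ hs₀
  obtain ⟨t₁, rfl⟩ := hτ_range s₁ hs₁
  exact ⟨t₀, t₁, hl⟩

theorem exists_skewEval_eq_zero_of_map [CharP F p] (hF : Fintype.card F = p ^ m)
    (hK : Fintype.card K = (p ^ m) ^ 2) {P : F[X]} (hP : P.natDegree = 3) {b : K}
    (hb : skewEval (iterateFrobenius K p k) b (P.map (algebraMap F K)) = 0) :
    ∃ x, skewEval (iterateFrobenius F p k) x P = 0 := by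
  set σ := iterateFrobenius F p k
  set σK := iterateFrobenius K p k
  set φ := algebraMap F K
  have hφ : Function.Semiconj φ σ σK := fun x => map_pow φ x _
  have ha₃ : P.coeff 3 ≠ 0 := by
    rw [← hP]
    exact leadingCoeff_ne_zero.2 (by rintro rfl; simp at hP)
  by_contra! hno
  have hb_out : ∀ x, φ x ≠ b := by
    rintro x rfl
    exact hno x (φ.injective (by rw [← skewEval_map σ σK φ hφ, hb, map_zero]))
  obtain ⟨t₀, t₁, hl⟩ := exists_skewQuadratic_eq_zero_of_notMem_range (k := k) hF hK
    fun ⟨x, hx⟩ => hb_out x hx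
  set w := P.coeff 2 - P.coeff 3 * σ t₁
  set d₁ := P.coeff 1 - P.coeff 3 * σ t₀ - w * t₁
  set d₀ := P.coeff 0 - w * t₀
  have hd : φ d₁ * b + φ d₀ = 0 := by
    have := skewEval_eq_linear_mul_skewQuadratic_add σK (P.map φ)
      (natDegree_map_le.trans hP.le) (φ t₀) (φ t₁) b
    rw [hb, hl] at this
    simp only [d₁, d₀, w, map_zero, map_sub, map_mul, hφ.eq, coeff_map] at this ⊢
    linear_combination -this
  have hd₁ : d₁ = 0 := by
    by_contra h
    refine hb_out (-d₀ / d₁) ?_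
    rw [map_div₀, map_neg, div_eq_iff ((map_ne_zero φ).2 h)]
    linear_combination -hd
  have hd₀ : d₀ = 0 := φ.injective (by simpa [hd₁] using hd)
  obtain ⟨z, hz⟩ := exists_linear_mul_skewQuadratic_eq_zero σ t₀ t₁ ha₃ w
  apply hno z
  rw [skewEval_eq_linear_mul_skewQuadratic_add σ P hP.le t₀ t₁ z]
  change _ + w * _ + (d₁ * z + d₀) = 0
  rw [hd₁, hd₀, hz]
  ring

end Descent

/-- a degree-3 twisted polynomial over `F_q` with no linear right
divisor in `F_q[t;σ]` has no linear right divisor in `F_{q²}[t;σ]` either. -/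
theorem stmt8 (p m k : ℕ) [Fact p.Prime]
    (F K : Type*) [Field F] [Field K] [Algebra F K]
    [Fintype F] [Fintype K] [CharP F p] [CharP K p]
    (hF : Fintype.card F = p ^ m) (hK : Fintype.card K = (p ^ m) ^ 2)
    (P : Polynomial F) (hdeg : P.natDegree = 3)
    (h : ¬ ∃ (R : Polynomial F) (b : F),
        P = skewMul (fun x : F => x ^ (p ^ k)) R (X - C b)) :
    ¬ ∃ (R : Polynomial K) (b : K),
        P.map (algebraMap F K) = skewMul (fun x : K => x ^ (p ^ k)) R (X - C b) := by
  rintro ⟨R, b, hR⟩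
  obtain ⟨x, hx⟩ := exists_skewEval_eq_zero_of_map hF hK hdeg
    ((exists_eq_skewMul_X_sub_C_iff (iterateFrobenius K p k) _ b).1 ⟨R, hR⟩)
  obtain ⟨R', hR'⟩ := (exists_eq_skewMul_X_sub_C_iff (iterateFrobenius F p k) P x).2 hx
  exact h ⟨R', x, hR'⟩
end

section
/- Let H ≤ F_{2^m}^× be a subgroup not contained in any proper subfield of F_{2^m}, and let S ≤ GL(3m, 2) be the group of F_2-linear maps {x ↦ ax : a ∈ H} acting on F_{2^{3m}}. Then the normalizer of S in GL(3m, 2) equals ΓL(3, 2^m), realized as the set of invertible maps of the form x ↦ c_k x^{2^k} + c_{k+m} x^{2^{k+m}} + c_{k+2m} x^{2^{k+2m}} with c_i ∈ F_{2^{3m}}. -/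
/-!
Over a finite field `F` with `q` elements, the Frobenius powers `x ↦ x ^ q ^ j`, `j < [L : F]`,
are `L`-linearly independent (Dedekind) and as many as `dim_L End_F(L)`, so every `F`-linear map
of `L` is a unique linearized polynomial `∑ cⱼ x ^ q ^ j`. Comparing coefficients in
`f (a x) = a' f x` gives `a ^ q ^ j = a'` for every `j` in the support, so any two support indices
`i, j` satisfy `a ^ q ^ i = a ^ q ^ j` on `H`; as `H` lies in no proper subfield of `F_{q^m}`, this
forces `i ≡ j [MOD m]`, and the support sits in `{k, k + m, k + 2m}`. Conversely such a map is
semilinear for `a ↦ a ^ 2 ^ k`, which permutes `H`.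
-/

open Module Function

theorem Function.Injective.modEq_of_iterate_eq {α : Type*} {f : α → α} (hf : Injective f)
    {S : Set α} {m : ℕ} (hm : ∀ a ∈ S, IsPeriodicPt f m a)
    (hmin : ∀ l, l ∣ m → (∀ a ∈ S, IsPeriodicPt f l a) → l = m)
    {i j : ℕ} (h : ∀ a ∈ S, f^[i] a = f^[j] a) : i ≡ j [MOD m] := by
  wlog hij : i ≤ j generalizing i j
  · exact (this (fun a ha => (h a ha).symm) (by omega)).symm
  have hper : ∀ a ∈ S, IsPeriodicPt f (j - i) a := fun a ha =>
    hf.iterate i (by rw [← iterate_add_apply, Nat.add_sub_cancel' hij]; exact (h a ha).symm)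
  rw [Nat.modEq_iff_dvd' hij,
    ← hmin _ (Nat.gcd_dvd_right _ _) fun a ha => (hper a ha).gcd (hm a ha)]
  exact Nat.gcd_dvd_left _ _

theorem isPeriodicPt_pow_iff {M : Type*} [Monoid M] (p n : ℕ) (a : M) :
    IsPeriodicPt (· ^ p) n a ↔ a ^ p ^ n = a := by
  rw [IsPeriodicPt, IsFixedPt, pow_iterate]

theorem pow_pow_add_mul_of_pow_pow_eq_self {M : Type*} [Monoid M] {p m : ℕ} {a : M}
    (h : a ^ p ^ m = a) (k t : ℕ) : a ^ p ^ (k + t * m) = a ^ p ^ k := by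
  have hper := (isPeriodicPt_pow_iff p (t * m) a).1
    (((isPeriodicPt_pow_iff p m a).2 h).const_mul t)
  rw [add_comm, pow_add, pow_mul, hper]

theorem Fin.sum_eq_add_add_of_modEq {M : Type*} [AddCommMonoid M] {m d k : ℕ}
    (hd : d = 3 * m) (hk : k < m) (g : Fin d → M)
    (hg : ∀ j, g j ≠ 0 → (j : ℕ) ≡ k [MOD m]) :
    ∑ j, g j = g ⟨k, by omega⟩ + g ⟨k + m, by omega⟩ + g ⟨k + 2 * m, by omega⟩ := by
  classical
  have hsupp : ∀ j, g j ≠ 0 →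
      j = ⟨k, by omega⟩ ∨ j = ⟨k + m, by omega⟩ ∨ j = ⟨k + 2 * m, by omega⟩ := by
    intro j hj
    have hjk : (j : ℕ) % m = k := by have := hg j hj; rwa [Nat.ModEq, Nat.mod_eq_of_lt hk] at this
    have hq : (j : ℕ) / m < 3 := Nat.div_lt_of_lt_mul (by omega)
    have := Nat.div_add_mod j m
    simp only [Fin.ext_iff]
    interval_cases (j : ℕ) / m <;> omega
  rw [← Finset.sum_subset
    (Finset.subset_univ {⟨k, by omega⟩, ⟨k + m, by omega⟩, ⟨k + 2 * m, by omega⟩})]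
  · rw [Finset.sum_insert, Finset.sum_pair, add_assoc] <;> simp [Fin.ext_iff] <;> omega
  · intro j _ hj
    by_contra hne
    simp only [Finset.mem_insert, Finset.mem_singleton] at hj
    exact hj (hsupp j hne)

namespace FiniteField

variable (F L : Type*) [Field F] [Fintype F] [Field L] [Algebra F L] [Finite L]

noncomputable def frobeniusPowBasis : Basis (Fin (finrank F L)) L (L →ₗ[F] L) :=
  basisOfLinearIndependentOfCardEqFinrank' _
    ((linearIndependent_toLinearMap F L L).comp _ (bijective_frobeniusAlgHom_pow F L).injective)
    (by rw [Fintype.card_fin, finrank_linearMap_self])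

theorem frobeniusPowBasis_apply (j : Fin (finrank F L)) (x : L) :
    frobeniusPowBasis F L j x = x ^ Fintype.card F ^ (j : ℕ) := by
  simp [frobeniusPowBasis, AlgHom.coe_pow, coe_frobeniusAlgHom, pow_iterate]

variable {F L}

theorem linearMap_apply_eq_sum (f : L →ₗ[F] L) (x : L) :
    f x = ∑ j, (frobeniusPowBasis F L).repr f j * x ^ Fintype.card F ^ (j : ℕ) := by
  conv_lhs => rw [← (frobeniusPowBasis F L).sum_repr f]
  simp only [LinearMap.sum_apply, LinearMap.smul_apply, frobeniusPowBasis_apply, smul_eq_mul]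

theorem frobeniusPowBasis_repr_comp_mulLeft (f : L →ₗ[F] L) (a : L) (j : Fin (finrank F L)) :
    (frobeniusPowBasis F L).repr (f ∘ₗ LinearMap.mulLeft F a) j =
      (frobeniusPowBasis F L).repr f j * a ^ Fintype.card F ^ (j : ℕ) := by
  set b := frobeniusPowBasis F L
  have : f ∘ₗ LinearMap.mulLeft F a =
      ∑ i, (b.repr f i * a ^ Fintype.card F ^ (i : ℕ)) • b i := by
    ext x
    simp [linearMap_apply_eq_sum f, frobeniusPowBasis_apply, b, mul_pow, mul_assoc]
  rw [this, b.repr_sum_self]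

theorem pow_card_pow_eq_of_comp_mulLeft_eq_smul {f : L →ₗ[F] L} {a a' : L}
    (h : f ∘ₗ LinearMap.mulLeft F a = a' • f) {j : Fin (finrank F L)}
    (hj : (frobeniusPowBasis F L).repr f j ≠ 0) : a ^ Fintype.card F ^ (j : ℕ) = a' := by
  have := congr((frobeniusPowBasis F L).repr $h j)
  rw [frobeniusPowBasis_repr_comp_mulLeft, map_smul, Finsupp.smul_apply, smul_eq_mul,
    mul_comm a'] at this
  exact mul_left_cancel₀ hj this

theorem modEq_of_frobeniusPowBasis_repr_ne_zero {S : Set L} {m : ℕ}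
    (hm : ∀ a ∈ S, a ^ Fintype.card F ^ m = a)
    (hmin : ∀ l, l ∣ m → (∀ a ∈ S, a ^ Fintype.card F ^ l = a) → l = m)
    {f : L →ₗ[F] L} (hf : ∀ a ∈ S, ∃ a' : L, f ∘ₗ LinearMap.mulLeft F a = a' • f)
    {i j : Fin (finrank F L)} (hi : (frobeniusPowBasis F L).repr f i ≠ 0)
    (hj : (frobeniusPowBasis F L).repr f j ≠ 0) : (i : ℕ) ≡ j [MOD m] := by
  refine Injective.modEq_of_iterate_eq (f := (· ^ Fintype.card F))
    (frobeniusAlgHom F L).injective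
    (fun a ha => (isPeriodicPt_pow_iff _ _ a).2 (hm a ha))
    (fun l hl hS => hmin l hl fun a ha => (isPeriodicPt_pow_iff _ _ a).1 (hS a ha)) fun a ha => ?_
  obtain ⟨a', ha'⟩ := hf a ha
  simp only [pow_iterate]
  rw [pow_card_pow_eq_of_comp_mulLeft_eq_smul ha' hi,
    pow_card_pow_eq_of_comp_mulLeft_eq_smul ha' hj]

theorem exists_apply_eq_of_comp_mulLeft_eq_smul {S : Set L} {m : ℕ}
    (hd : finrank F L = 3 * m) (hm : ∀ a ∈ S, a ^ Fintype.card F ^ m = a)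
    (hmin : ∀ l, l ∣ m → (∀ a ∈ S, a ^ Fintype.card F ^ l = a) → l = m)
    {f : L →ₗ[F] L} (hf0 : f ≠ 0)
    (hf : ∀ a ∈ S, ∃ a' : L, f ∘ₗ LinearMap.mulLeft F a = a' • f) :
    ∃ (k : ℕ) (c₀ c₁ c₂ : L), ∀ x : L, f x = c₀ * x ^ Fintype.card F ^ k +
      c₁ * x ^ Fintype.card F ^ (k + m) + c₂ * x ^ Fintype.card F ^ (k + 2 * m) := by
  set b := frobeniusPowBasis F L
  obtain ⟨i, hi⟩ : ∃ i, b.repr f i ≠ 0 := by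
    by_contra! h
    exact hf0 (b.ext_elem fun i => by simp [h])
  have hid := i.isLt
  have hk : (i : ℕ) % m < m := Nat.mod_lt _ (by omega)
  refine ⟨i % m, b.repr f ⟨i % m, by omega⟩, b.repr f ⟨i % m + m, by omega⟩,
    b.repr f ⟨i % m + 2 * m, by omega⟩, fun x => ?_⟩
  rw [linearMap_apply_eq_sum, Fin.sum_eq_add_add_of_modEq hd hk]
  intro j hj
  exact (modEq_of_frobeniusPowBasis_repr_ne_zero hm hmin hf (left_ne_zero_of_mul hj) hi).trans
    (Nat.mod_modEq _ _).symm

end FiniteField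

theorem Subgroup.exists_mem_pow_expChar_pow_eq {K : Type*} [Field K] [Finite K] (p : ℕ)
    [ExpChar K p] (H : Subgroup Kˣ) (k : ℕ) {b : Kˣ} (hb : b ∈ H) :
    ∃ a ∈ H, a ^ p ^ k = b := by
  have hinj : Injective fun a : H => (⟨a ^ p ^ k, pow_mem a.2 _⟩ : H) := fun a c hac =>
    Subtype.ext <| Units.ext <| iterateFrobenius_inj K p k <| by
      simpa [iterateFrobenius_def] using congr(((($hac : H) : Kˣ) : K))
  obtain ⟨a, ha⟩ := Finite.surjective_of_injective hinj ⟨b, hb⟩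
  exact ⟨a, a.2, congr(($ha : Kˣ))⟩

theorem stmt14_general (m : ℕ)
    (K : Type*) [Field K] [Fintype K] [CharP K 2]
    (hcard : Fintype.card K = 2 ^ (3 * m))
    (H : Subgroup Kˣ)
    -- H is contained in F_{2^m}^×
    (hHm : ∀ a ∈ H, (a : K) ^ (2 ^ m) = (a : K))
    -- H is not contained in any proper subfield of F_{2^m}
    (hgen : ∀ l, l ∣ m → (∀ a ∈ H, (a : K) ^ (2 ^ l) = (a : K)) → l = m)
    (L : K ≃+ K) :
    -- L normalizes the group of scalar multiplications by elements of H ...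
    ((∀ a ∈ H, ∃ a' ∈ H, ∀ x : K, L ((a : K) * x) = (a' : K) * L x) ∧
     (∀ a' ∈ H, ∃ a ∈ H, ∀ x : K, L ((a : K) * x) = (a' : K) * L x)) ↔
    -- ... iff L belongs to ΓL(3, 2^m)
    ∃ (k : ℕ) (c₀ c₁ c₂ : K), ∀ x : K,
      L x = c₀ * x ^ 2 ^ k + c₁ * x ^ 2 ^ (k + m) + c₂ * x ^ 2 ^ (k + 2 * m) := by
  let := ZMod.algebra K 2
  constructor
  · rintro ⟨hnorm, -⟩
    have hd : finrank (ZMod 2) K = 3 * m := by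
      refine Nat.pow_right_injective le_rfl ?_
      dsimp only
      rw [← hcard, Module.card_eq_pow_finrank (K := ZMod 2), ZMod.card]
    set f := L.toAddMonoidHom.toZModLinearMap 2
    have hf0 : f ≠ 0 := fun h => one_ne_zero (L.injective (by simpa [f] using congr($h 1)))
    have hf : ∀ a ∈ Units.val '' (H : Set Kˣ),
        ∃ a' : K, f ∘ₗ LinearMap.mulLeft (ZMod 2) a = a' • f := by
      rintro _ ⟨a, ha, rfl⟩
      obtain ⟨a', -, ha'⟩ := hnorm a ha
      exact ⟨a', LinearMap.ext ha'⟩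
    simpa [ZMod.card, f] using FiniteField.exists_apply_eq_of_comp_mulLeft_eq_smul hd
      (by simpa [ZMod.card] using hHm) (by simpa [ZMod.card] using hgen) hf0 hf
  · rintro ⟨k, c₀, c₁, c₂, hL⟩
    have hsemi : ∀ a ∈ H, ∀ x, L ((a : K) * x) = (a : K) ^ 2 ^ k * L x := by
      intro a ha x
      have h₁ := pow_pow_add_mul_of_pow_pow_eq_self (hHm a ha) k 1
      have h₂ := pow_pow_add_mul_of_pow_pow_eq_self (hHm a ha) k 2
      rw [one_mul] at h₁
      rw [hL, hL, mul_pow, mul_pow, mul_pow, h₁, h₂]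
      ring
    refine ⟨fun a ha => ⟨a ^ 2 ^ k, pow_mem ha _, by simpa using hsemi a ha⟩,
      fun b hb => ?_⟩
    obtain ⟨a, ha, rfl⟩ := Subgroup.exists_mem_pow_expChar_pow_eq 2 H k hb
    exact ⟨a, ha, by simpa using hsemi a ha⟩

/-- let `H ≤ F_{2^m}^×` be a subgroup not contained in a proper
subfield of `F_{2^m}`, acting by scalar multiplication on `K = F_{2^{3m}}`. An
(additive, i.e. `F_2`-linear) automorphism `L` of `K` normalizes this group of
scalar multiplications iff `L ∈ ΓL(3, 2^m)`, i.e. `L` is of the form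
`x ↦ c₀ x^{2^k} + c₁ x^{2^{k+m}} + c₂ x^{2^{k+2m}}`. -/
theorem stmt14 (m : ℕ) (hm : 0 < m)
    (K : Type*) [Field K] [Fintype K] [CharP K 2]
    (hcard : Fintype.card K = 2 ^ (3 * m))
    (H : Subgroup Kˣ)
    -- H is contained in F_{2^m}^×
    (hHm : ∀ a ∈ H, (a : K) ^ (2 ^ m) = (a : K))
    -- H is not contained in any proper subfield of F_{2^m}
    (hgen : ∀ l, l ∣ m → (∀ a ∈ H, (a : K) ^ (2 ^ l) = (a : K)) → l = m)
    (L : K ≃+ K) :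
    -- L normalizes the group of scalar multiplications by elements of H ...
    ((∀ a ∈ H, ∃ a' ∈ H, ∀ x : K, L ((a : K) * x) = (a' : K) * L x) ∧
     (∀ a' ∈ H, ∃ a ∈ H, ∀ x : K, L ((a : K) * x) = (a' : K) * L x)) ↔
    -- ... iff L belongs to ΓL(3, 2^m)
    ∃ (k : ℕ) (c₀ c₁ c₂ : K), ∀ x : K,
      L x = c₀ * x ^ 2 ^ k + c₁ * x ^ 2 ^ (k + m) + c₂ * x ^ 2 ^ (k + 2 * m) :=
  stmt14_general m K hcard H hHm hgen L
end
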